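/- arXiv:1302.2717 — 2 statements merged into one kernel-verified Lean document; each statement's English description precedes it below -/
import Mathlib

section
/- Let f, h ∈ ℝ^n with f non-constant, med(f) = 0, and h non-constant. Let E(u) = ‖u‖_TV / ‖u - med(u)𝟙‖₁, let θ ∈ (0,1], and let v ∈ ∂‖f‖₁. If ‖f‖_TV > ‖h‖_TV + θE(f)‖h - f‖₂² - E(f)⟨v, h - f⟩, then E(f) > E(h) + θE(f)‖h - f‖₂² / ‖h - med(h)𝟙‖₁. -/
/-!
Since `med f = 0`, `E(f)‖f‖₁ = ‖f‖_TV`, and the zero-mean subgradient inequality gives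
`‖h - med(h)𝟙‖₁ ≥ ‖f‖₁ + ⟨v, h - f⟩`. Multiplying it by `E(f) ≥ 0` turns the hypothesis into
`E(f)‖h - med(h)𝟙‖₁ > ‖h‖_TV + θE(f)‖h - f‖₂²`; the right side is nonnegative, so
`‖h - med(h)𝟙‖₁ > 0`, and dividing by it gives the claim.
-/

noncomputable def med {n : ℕ} (f : Fin (n + 1) → ℝ) : ℝ :=
  f (Tuple.sort f ⟨n / 2, Nat.lt_succ_of_le (Nat.div_le_self n 2)⟩)

noncomputable def tvF {n : ℕ} (w : Fin n → Fin n → ℝ) (u : Fin n → ℝ) : ℝ :=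
  ∑ i, ∑ j, w i j * |u i - u j|

noncomputable def EF {n : ℕ} (w : Fin (n + 1) → Fin (n + 1) → ℝ) (u : Fin (n + 1) → ℝ) : ℝ :=
  tvF w u / ∑ i, |u i - med u|

theorem tvF_nonneg {n : ℕ} {w : Fin n → Fin n → ℝ} (hw : ∀ i j, 0 ≤ w i j) (u : Fin n → ℝ) :
    0 ≤ tvF w u :=
  Finset.sum_nonneg fun i _ => Finset.sum_nonneg fun j _ => mul_nonneg (hw i j) (abs_nonneg _)

theorem EF_nonneg {n : ℕ} {w : Fin (n + 1) → Fin (n + 1) → ℝ} (hw : ∀ i j, 0 ≤ w i j)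
    (u : Fin (n + 1) → ℝ) : 0 ≤ EF w u :=
  div_nonneg (tvF_nonneg hw u) (Finset.sum_nonneg fun _ _ => abs_nonneg _)

/-- Holds also for constant `u`, where both sides vanish (the left one through `x / 0 = 0`). -/
theorem EF_mul_sum_abs_sub_med {n : ℕ} (w : Fin (n + 1) → Fin (n + 1) → ℝ)
    (u : Fin (n + 1) → ℝ) : EF w u * ∑ i, |u i - med u| = tvF w u := by
  by_cases hD : ∑ i, |u i - med u| = 0
  · have hconst : ∀ i, u i = med u := fun i => by
      have := (Finset.sum_eq_zero_iff_of_nonneg fun j _ => abs_nonneg (u j - med u)).1 hD i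
        (Finset.mem_univ i)
      rwa [abs_eq_zero, sub_eq_zero] at this
    simp [tvF, hconst]
  · exact div_mul_cancel₀ _ hD

/-- The shift `m` is invisible to `⟨v, ·⟩` because `v` has zero mean. -/
theorem add_inner_le_sum_abs_sub {ι : Type*} [Fintype ι] {f v : ι → ℝ}
    (hv : ∀ g : ι → ℝ, (∑ i, |g i|) - (∑ i, |f i|) ≥ ∑ i, v i * (g i - f i))
    (hv0 : ∑ i, v i = 0) (h : ι → ℝ) (m : ℝ) :
    ∑ i, |f i| + ∑ i, v i * (h i - f i) ≤ ∑ i, |h i - m| := by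
  have hshift : ∑ i, v i * (h i - m - f i) = ∑ i, v i * (h i - f i) := by
    simp only [mul_sub, Finset.sum_sub_distrib, ← Finset.sum_mul, hv0, zero_mul, sub_zero]
  linarith [hv fun i => h i - m]

theorem adaptive_stopping_implies_energy_descent_general (n : ℕ)
    (w : Fin (n + 1) → Fin (n + 1) → ℝ) (hnn : ∀ i j, 0 ≤ w i j)
    (θ : ℝ) (hθ : θ ∈ Set.Ioc (0 : ℝ) 1)
    (f h v : Fin (n + 1) → ℝ)
    (hmf : med f = 0)
    (hv : ∀ g : Fin (n + 1) → ℝ, (∑ i, |g i|) - (∑ i, |f i|) ≥ ∑ i, v i * (g i - f i))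
    (hv0 : ∑ i, v i = 0)
    (hyp : tvF w f > tvF w h + θ * EF w f * (∑ i, (h i - f i) ^ 2)
        - EF w f * ∑ i, v i * (h i - f i)) :
    EF w f > EF w h + θ * EF w f * (∑ i, (h i - f i) ^ 2) / (∑ i, |h i - med h|) := by
  set Q := ∑ i, (h i - f i) ^ 2
  set c := ∑ i, v i * (h i - f i)
  set Dh := ∑ i, |h i - med h|
  have hEf := EF_nonneg hnn f
  have key : tvF w h + θ * EF w f * Q < EF w f * Dh :=
    calc tvF w h + θ * EF w f * Q < tvF w f + EF w f * c := by linarith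
      _ = EF w f * (∑ i, |f i| + c) := by
        rw [mul_add, ← EF_mul_sum_abs_sub_med w f, hmf]
        simp only [sub_zero]
      _ ≤ EF w f * Dh := mul_le_mul_of_nonneg_left (add_inner_le_sum_abs_sub hv hv0 h _) hEf
  have hlow : 0 ≤ tvF w h + θ * EF w f * Q :=
    add_nonneg (tvF_nonneg hnn h)
      (mul_nonneg (mul_nonneg hθ.1.le hEf) (Finset.sum_nonneg fun i _ => sq_nonneg _))
  have hDh : 0 < Dh := pos_of_mul_pos_right (hlow.trans_lt key) hEf
  calc EF w h + θ * EF w f * Q / Dh = (tvF w h + θ * EF w f * Q) / Dh := by rw [EF, add_div]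
    _ < EF w f := (div_lt_iff₀ hDh).2 (by linarith)

theorem adaptive_stopping_implies_energy_descent (n : ℕ)
    (w : Fin (n + 1) → Fin (n + 1) → ℝ) (hnn : ∀ i j, 0 ≤ w i j)
    (θ : ℝ) (hθ : θ ∈ Set.Ioc (0 : ℝ) 1)
    (f h v : Fin (n + 1) → ℝ)
    (hfnc : ∃ i j, f i ≠ f j) (hmf : med f = 0) (hhnc : ∃ i j, h i ≠ h j)
    (hv : ∀ g : Fin (n + 1) → ℝ, (∑ i, |g i|) - (∑ i, |f i|) ≥ ∑ i, v i * (g i - f i))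
    (hv0 : ∑ i, v i = 0)
    (hyp : tvF w f > tvF w h + θ * EF w f * (∑ i, (h i - f i) ^ 2)
        - EF w f * ∑ i, v i * (h i - f i)) :
    EF w f > EF w h + θ * EF w f * (∑ i, (h i - f i) ^ 2) / (∑ i, |h i - med h|) :=
  adaptive_stopping_implies_energy_descent_general n w hnn θ hθ f h v hmf hv hv0 hyp
end

section
/- Let f^∞ ∈ ℝ^n with ‖f^∞‖₂ = 1 and med(f^∞) = 0, let v^∞ ∈ ∂‖f^∞‖₁ with ⟨v^∞,𝟙⟩ = 0, and suppose h^∞ ∈ ℝ^n satisfies ‖f^∞‖_TV ≥ ‖h^∞‖_TV + θE(f^∞)‖h^∞ - f^∞‖₂² - E(f^∞)⟨v^∞, h^∞ - f^∞⟩ for some θ ∈ (0,1]. If f^∞ is a local minimum of E on {u : u non-constant} and h_η := ηh^∞ + (1-η)f^∞ is non-constant for all η ∈ (0,1], then h^∞ = f^∞. -/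
/-! If `h ≠ f`, moving from `f` towards `h` strictly decreases `E`. By convexity of TV and the
assumed inequality, the numerator of `E(h_η)` is at most
`E(f) (‖f‖₁ + η⟨v, h - f⟩) - η θ E(f) ‖h - f‖₂²`, while the subgradient inequality for `v`, applied
to `h_η - med(h_η)𝟙` (the shift is invisible to `v` since `⟨v, 𝟙⟩ = 0`), bounds the denominator
below by `‖f‖₁ + η⟨v, h - f⟩`. Small `η` keeps `h_η` in the neighbourhood where `f` is minimal. -/

section

variable {ι : Type*} [Fintype ι]

lemma sum_abs_sub_const_ge_of_subgradient {f v : ι → ℝ}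
    (hv : ∀ g : ι → ℝ, (∑ i, |g i|) - (∑ i, |f i|) ≥ ∑ i, v i * (g i - f i))
    (hv0 : ∑ i, v i = 0) (g : ι → ℝ) (c : ℝ) :
    ∑ i, |f i| + ∑ i, v i * (g i - f i) ≤ ∑ i, |g i - c| := by
  have key := hv fun i => g i - c
  have shift : ∑ i, v i * (g i - c - f i) = ∑ i, v i * (g i - f i) - c * ∑ i, v i := by
    simp only [Finset.mul_sum, ← Finset.sum_sub_distrib]
    exact Finset.sum_congr rfl fun i _ => by ring
  rw [shift, hv0] at key
  linarith

lemma sum_abs_sub_const_pos {u : ι → ℝ} {a b : ι} (hab : u a ≠ u b) (c : ℝ) :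
    0 < ∑ i, |u i - c| := by
  have ⟨i, hi⟩ : ∃ i, u i ≠ c := by
    by_contra! h
    exact hab ((h a).trans (h b).symm)
  exact Finset.sum_pos' (fun i _ => abs_nonneg _)
    ⟨i, Finset.mem_univ i, abs_pos.mpr (sub_ne_zero.mpr hi)⟩

lemma sum_sq_sub_pos {h f : ι → ℝ} (hne : h ≠ f) : 0 < ∑ i, (h i - f i) ^ 2 := by
  obtain ⟨i, hi⟩ := Function.ne_iff.mp hne
  have := sub_ne_zero.mpr hi
  exact Finset.sum_pos' (fun i _ => sq_nonneg _) ⟨i, Finset.mem_univ i, by positivity⟩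

lemma sqrt_sum_sq_segment_sub (h f : ι → ℝ) {η : ℝ} (hη : 0 ≤ η) :
    √(∑ i, (η * h i + (1 - η) * f i - f i) ^ 2) = η * √(∑ i, (h i - f i) ^ 2) := by
  have : ∑ i, (η * h i + (1 - η) * f i - f i) ^ 2 = η ^ 2 * ∑ i, (h i - f i) ^ 2 := by
    rw [Finset.mul_sum]
    exact Finset.sum_congr rfl fun i _ => by ring
  rw [this, Real.sqrt_mul (sq_nonneg η), Real.sqrt_sq hη]

end

lemma convexOn_tvF {n : ℕ} {w : Fin n → Fin n → ℝ} (hw : ∀ i j, 0 ≤ w i j) :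
    ConvexOn ℝ Set.univ (tvF w) := by
  refine ⟨convex_univ, fun u _ v _ a b ha hb hab => ?_⟩
  simp only [tvF, smul_eq_mul, Finset.mul_sum, ← Finset.sum_add_distrib]
  refine Finset.sum_le_sum fun i _ => Finset.sum_le_sum fun j _ => ?_
  have hpair : (a • u + b • v) i - (a • u + b • v) j = a • (u i - u j) + b • (v i - v j) := by
    simp only [Pi.add_apply, Pi.smul_apply, smul_eq_mul]; ring
  have habs := (convexOn_norm convex_univ).2 trivial trivial ha hb hab (x := u i - u j) (y := v i - v j)
  simp only [Real.norm_eq_abs, smul_eq_mul] at habs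
  rw [hpair, smul_eq_mul, smul_eq_mul]
  nlinarith [hw i j]

lemma tvF_eq_EF_mul {n : ℕ} {w : Fin (n + 1) → Fin (n + 1) → ℝ} {u : Fin (n + 1) → ℝ}
    (hE : EF w u ≠ 0) : tvF w u = EF w u * ∑ i, |u i - med u| := by
  have hden : ∑ i, |u i - med u| ≠ 0 := fun h => hE (by rw [EF, h, div_zero])
  rw [EF, div_mul_cancel₀ _ hden]

lemma EF_segment_lt {n : ℕ} {w : Fin (n + 1) → Fin (n + 1) → ℝ} (hw : ∀ i j, 0 ≤ w i j)
    {θ : ℝ} (hθ : 0 < θ) {f v h : Fin (n + 1) → ℝ} (hmf : med f = 0)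
    (hv : ∀ g : Fin (n + 1) → ℝ, (∑ i, |g i|) - (∑ i, |f i|) ≥ ∑ i, v i * (g i - f i))
    (hv0 : ∑ i, v i = 0) (hEf : 0 < EF w f)
    (hineq : tvF w f ≥ tvF w h + θ * EF w f * (∑ i, (h i - f i) ^ 2)
        - EF w f * ∑ i, v i * (h i - f i))
    (hne : h ≠ f) {η : ℝ} (hη0 : 0 < η) (hη1 : η ≤ 1)
    (hu : ∃ a b, η * h a + (1 - η) * f a ≠ η * h b + (1 - η) * f b) :
    EF w (fun i => η * h i + (1 - η) * f i) < EF w f := by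
  set u : Fin (n + 1) → ℝ := fun i => η * h i + (1 - η) * f i
  set E := EF w f
  set D := ∑ i, (h i - f i) ^ 2
  set s := ∑ i, v i * (h i - f i)
  obtain ⟨a, b, hab⟩ := hu
  have hden_pos : 0 < ∑ i, |u i - med u| := sum_abs_sub_const_pos hab _
  have hden : ∑ i, |f i| + η * s ≤ ∑ i, |u i - med u| := by
    have hshift : ∑ i, v i * (u i - f i) = η * s := by
      rw [Finset.mul_sum]
      exact Finset.sum_congr rfl fun i _ => by simp only [u]; ring
    simpa [hshift] using sum_abs_sub_const_ge_of_subgradient hv hv0 u (med u)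
  have hf : tvF w f = E * ∑ i, |f i| := by simpa [hmf] using tvF_eq_EF_mul hEf.ne'
  have hconv : tvF w u ≤ η * tvF w h + (1 - η) * tvF w f :=
    (convexOn_tvF hw).2 trivial trivial hη0.le (by linarith) (by ring)
  have hdescent : 0 < η * θ * E * D := by have := sum_sq_sub_pos hne; positivity
  rw [EF, div_lt_iff₀ hden_pos]
  calc tvF w u ≤ η * tvF w h + (1 - η) * tvF w f := hconv
    _ ≤ η * (tvF w f - θ * E * D + E * s) + (1 - η) * tvF w f := by gcongr; linarith
    _ = E * (∑ i, |f i| + η * s) - η * θ * E * D := by rw [hf]; ring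
    _ < E * ∑ i, |u i - med u| := by nlinarith [mul_le_mul_of_nonneg_left hden hEf.le]

theorem clm_property_at_local_minimum_general (n : ℕ)
    (w : Fin (n + 1) → Fin (n + 1) → ℝ) (hnn : ∀ i j, 0 ≤ w i j)
    (θ : ℝ) (hθ : θ ∈ Set.Ioc (0 : ℝ) 1)
    (finf vinf hinf : Fin (n + 1) → ℝ)
    (hmf : med finf = 0)
    (hv : ∀ g : Fin (n + 1) → ℝ,
      (∑ i, |g i|) - (∑ i, |finf i|) ≥ ∑ i, vinf i * (g i - finf i))
    (hv0 : ∑ i, vinf i = 0)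
    (hEf : 0 < EF w finf)
    (hineq : tvF w finf ≥ tvF w hinf + θ * EF w finf * (∑ i, (hinf i - finf i) ^ 2)
        - EF w finf * ∑ i, vinf i * (hinf i - finf i))
    (hlocal : ∃ ε > (0 : ℝ), ∀ u : Fin (n + 1) → ℝ, (∃ a b, u a ≠ u b) →
        Real.sqrt (∑ i, (u i - finf i) ^ 2) ≤ ε → EF w finf ≤ EF w u)
    (hη : ∀ η : ℝ, 0 < η → η ≤ 1 →
        ∃ a b, η * hinf a + (1 - η) * finf a ≠ η * hinf b + (1 - η) * finf b) :
    hinf = finf := by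
  by_contra hne
  obtain ⟨ε, hε, hloc⟩ := hlocal
  set d := √(∑ i, (hinf i - finf i) ^ 2)
  have hd : 0 < d := Real.sqrt_pos.mpr (sum_sq_sub_pos hne)
  set η := min 1 (ε / d)
  have hη0 : 0 < η := lt_min one_pos (by positivity)
  have hη1 : η ≤ 1 := min_le_left _ _
  have hclose : √(∑ i, (η * hinf i + (1 - η) * finf i - finf i) ^ 2) ≤ ε := by
    rw [sqrt_sum_sq_segment_sub _ _ hη0.le, ← le_div_iff₀ hd]
    exact min_le_right _ _
  exact (hloc _ (hη η hη0 hη1) hclose).not_gt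
    (EF_segment_lt hnn hθ.1 hmf hv hv0 hEf hineq hne hη0 hη1 (hη η hη0 hη1))

theorem clm_property_at_local_minimum (n : ℕ)
    (w : Fin (n + 1) → Fin (n + 1) → ℝ) (hnn : ∀ i j, 0 ≤ w i j)
    (θ : ℝ) (hθ : θ ∈ Set.Ioc (0 : ℝ) 1)
    (finf vinf hinf : Fin (n + 1) → ℝ)
    (hf2 : Real.sqrt (∑ i, (finf i) ^ 2) = 1) (hmf : med finf = 0)
    (hv : ∀ g : Fin (n + 1) → ℝ,
      (∑ i, |g i|) - (∑ i, |finf i|) ≥ ∑ i, vinf i * (g i - finf i))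
    (hv0 : ∑ i, vinf i = 0)
    (hEf : 0 < EF w finf)
    (hineq : tvF w finf ≥ tvF w hinf + θ * EF w finf * (∑ i, (hinf i - finf i) ^ 2)
        - EF w finf * ∑ i, vinf i * (hinf i - finf i))
    (hlocal : ∃ ε > (0 : ℝ), ∀ u : Fin (n + 1) → ℝ, (∃ a b, u a ≠ u b) →
        Real.sqrt (∑ i, (u i - finf i) ^ 2) ≤ ε → EF w finf ≤ EF w u)
    (hη : ∀ η : ℝ, 0 < η → η ≤ 1 →
        ∃ a b, η * hinf a + (1 - η) * finf a ≠ η * hinf b + (1 - η) * finf b) :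
    hinf = finf :=
  clm_property_at_local_minimum_general n w hnn θ hθ finf vinf hinf hmf hv hv0 hEf hineq hlocal hη
end
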